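/- arXiv:2112.01721 — 2 statements merged into one kernel-verified Lean document; each statement's English description precedes it below -/
import Mathlib

section
/- Let G be a mixed graph with distinct vertices a, b having no arc between them. Then the degree sequence of the Kelmans transformation G_b^a equals the degree sequence of G if and only if one of the following holds: N⁺(a)∖{b} ⊆ N⁺(b)∖{a} and N⁻(a)∖{b} ⊆ N⁻(b)∖{a}; or N⁺(b)∖{a} ⊆ N⁺(a)∖{b} and N⁻(b)∖{a} ⊆ N⁻(a)∖{b}. Moreover, in that case G_b^a is isomorphic to G. -/
attribute [local instance] Classical.propDecidable

/-- The spectral radius of a real square matrix: the maximum of the complex moduli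
of its eigenvalues (roots of the characteristic polynomial over ℂ). -/
noncomputable def specRad {m : Type*} [Fintype m] [DecidableEq m] (M : Matrix m m ℝ) : ℝ :=
  sSup {r : ℝ | ∃ μ : ℂ, (M.map (fun x => (x : ℂ))).charpoly.IsRoot μ ∧ r = ‖μ‖}

/-- The `A_α` matrix `α D⁺ + (1-α) A` of a mixed graph given by its adjacency matrix `A`,
where `D⁺` is the diagonal out-degree matrix. -/
noncomputable def Aalpha {n : ℕ} (α : ℝ) (A : Matrix (Fin n) (Fin n) ℝ) :
    Matrix (Fin n) (Fin n) ℝ :=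
  α • Matrix.diagonal (fun i => ∑ j, A i j) + (1 - α) • A

/-- The Kelmans transformation of a mixed graph (given by its 0-1 adjacency matrix)
from `b` to `a`. -/
noncomputable def kelmansG {n : ℕ} (A : Matrix (Fin n) (Fin n) ℝ) (a b : Fin n) :
    Matrix (Fin n) (Fin n) ℝ :=
  Matrix.of fun i j =>
    if i ≠ a ∧ i ≠ b ∧ j = a then max (A i a) (A i b)
    else if i ≠ a ∧ i ≠ b ∧ j = b then min (A i a) (A i b)
    else if i = a ∧ j ≠ a ∧ j ≠ b then max (A a j) (A b j)
    else if i = b ∧ j ≠ a ∧ j ≠ b then min (A a j) (A b j)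
    else A i j

/-- `A` is the adjacency matrix of a mixed graph: a 0-1 matrix with zero diagonal. -/
def IsMixedAdj {n : ℕ} (A : Matrix (Fin n) (Fin n) ℝ) : Prop :=
  (∀ i j, A i j = 0 ∨ A i j = 1) ∧ ∀ i, A i i = 0

/-- The underlying simple graph of a mixed graph: forget orientations. -/
def underlying {n : ℕ} (A : Matrix (Fin n) (Fin n) ℝ) : SimpleGraph (Fin n) where
  Adj u v := u ≠ v ∧ (A u v = 1 ∨ A v u = 1)
  symm := ⟨fun u v ⟨h1, h2⟩ => ⟨h1.symm, h2.symm⟩⟩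
  loopless := ⟨fun u h => h.1 rfl⟩

/-- The graph of undirected edges of a mixed graph (delete all arcs). -/
def undirPart {n : ℕ} (A : Matrix (Fin n) (Fin n) ℝ) : SimpleGraph (Fin n) where
  Adj u v := u ≠ v ∧ A u v = 1 ∧ A v u = 1
  symm := ⟨fun u v ⟨h1, h2, h3⟩ => ⟨h1.symm, h3, h2⟩⟩
  loopless := ⟨fun u h => h.1 rfl⟩

/-- The degree of a vertex of a mixed graph: `|N⁺(u)| + |N⁻(u)|`. -/
noncomputable def mixedDeg {n : ℕ} (A : Matrix (Fin n) (Fin n) ℝ) (u : Fin n) : ℕ :=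
  (Finset.univ.filter fun v => A u v = 1).card + (Finset.univ.filter fun v => A v u = 1).card

/-- The degree sequence of a mixed graph, listed in descending order. -/
noncomputable def degSeq {n : ℕ} (A : Matrix (Fin n) (Fin n) ℝ) : List ℕ :=
  (Multiset.sort (Finset.univ.val.map fun u => mixedDeg A u) (· ≤ ·)).reverse

/-! Kelmans' transformation changes only the degrees of `a` and `b`: any other vertex `u` keeps
`A u a + A u b` and `A a u + A b u`, since `max x y + min x y = x + y`. The new degree of `a` is at
least both old degrees of `a` and `b`, with equality with the old degree of `a` (resp. `b`) exactly
when `a` dominates `b` (resp. `b` dominates `a`). Equal degree sequences force the new degree of `a`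
to be one of the two old ones, hence a domination. Conversely, if `a` dominates `b` the
transformation does nothing, and if `b` dominates `a` it relabels `G` by the transposition of `a`
and `b`: with zero diagonal and no arc between `a` and `b`, relabelling `A` by that transposition
does not change `G_b^a`, which reduces the second case to the first. -/

open Finset

theorem Multiset.eq_or_eq_of_map_univ_eq {ι α : Type*} [Fintype ι] [DecidableEq ι]
    {f g : ι → α} {a b : ι} (hab : a ≠ b) (hfg : ∀ u, u ≠ a → u ≠ b → f u = g u)
    (h : univ.val.map f = univ.val.map g) : f a = g a ∨ f a = g b := by
  set r := (univ.val.erase a).erase b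
  have huniv : univ.val = a ::ₘ b ::ₘ r := by
    rw [cons_erase ((mem_erase_of_ne hab.symm).2 (mem_univ_val b)),
      cons_erase (mem_univ_val a)]
  have hr : r.map f = r.map g := map_congr rfl fun u hu => by
    have hnd := (univ.nodup.erase a).mem_erase_iff.1 hu
    exact hfg u (univ.nodup.mem_erase_iff.1 hnd.2).1 hnd.1
  rw [huniv, map_cons, map_cons, map_cons, map_cons, hr, ← singleton_add, ← singleton_add,
    ← singleton_add, ← singleton_add, ← add_assoc, ← add_assoc, add_left_inj] at h
  have hmem : f a ∈ ({g a} + {g b} : Multiset α) :=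
    h ▸ mem_add.2 (Or.inl (mem_singleton_self _))
  simpa using hmem

theorem Finset.sum_eq_sum_of_eq_off_pair {ι M : Type*} [Fintype ι] [DecidableEq ι]
    [AddCommMonoid M] {f g : ι → M} {a b : ι} (hab : a ≠ b)
    (hfg : ∀ j, j ≠ a → j ≠ b → f j = g j) (hpair : f a + f b = g a + g b) :
    ∑ j, f j = ∑ j, g j := by
  rw [← sum_sdiff (subset_univ {a, b}), ← sum_sdiff (subset_univ {a, b}) (f := g),
    sum_pair hab, sum_pair hab, hpair]
  congr 1
  exact sum_congr rfl fun j hj => by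
    simp only [mem_sdiff, mem_univ, mem_insert, mem_singleton, not_or, true_and] at hj
    exact hfg j hj.1 hj.2

theorem le_iff_eq_one_imp {x y : ℝ} (hx : x = 0 ∨ x = 1) (hy : y = 0 ∨ y = 1) :
    x ≤ y ↔ (x = 1 → y = 1) := by
  rcases hx with rfl | rfl <;> rcases hy with rfl | rfl <;> norm_num

section Degrees

variable {n : ℕ}

theorem mixedDeg_submatrix (A : Matrix (Fin n) (Fin n) ℝ) (e : Equiv.Perm (Fin n)) (u : Fin n) :
    mixedDeg (A.submatrix e e) u = mixedDeg A (e u) := by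
  unfold mixedDeg
  congr 1 <;> exact card_equiv e fun i => by rw [mem_filter, mem_filter]; simp

theorem degSeq_eq_degSeq_iff {A B : Matrix (Fin n) (Fin n) ℝ} :
    degSeq A = degSeq B ↔ univ.val.map (mixedDeg A) = univ.val.map (mixedDeg B) := by
  refine ⟨fun h => ?_, fun h => by rw [degSeq, degSeq, h]⟩
  simpa only [Multiset.sort_eq] using
    congrArg ((↑) : List ℕ → Multiset ℕ) (List.reverse_injective h)

theorem degSeq_submatrix (A : Matrix (Fin n) (Fin n) ℝ) (e : Equiv.Perm (Fin n)) :
    degSeq (A.submatrix e e) = degSeq A := by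
  rw [degSeq_eq_degSeq_iff, funext (mixedDeg_submatrix A e)]
  exact (Multiset.map_map (mixedDeg A) e _).symm.trans (by rw [Multiset.map_univ_val_equiv])

theorem mixedDeg_eq_sum {M : Matrix (Fin n) (Fin n) ℝ} (hM : ∀ i j, M i j = 0 ∨ M i j = 1)
    (u : Fin n) : (mixedDeg M u : ℝ) = ∑ j, M u j + ∑ j, M j u := by
  have hcard : ∀ f : Fin n → ℝ, (∀ j, f j = 0 ∨ f j = 1) →
      ((univ.filter fun j => f j = 1).card : ℝ) = ∑ j, f j := fun f hf => by
    rw [card_filter, Nat.cast_sum]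
    exact sum_congr rfl fun j _ => by rcases hf j with h | h <;> simp [h]
  rw [mixedDeg, Nat.cast_add, hcard _ (hM u), hcard _ (hM · u)]

end Degrees

section Kelmans

variable {n : ℕ} (A : Matrix (Fin n) (Fin n) ℝ)

/-- For a 0-1 matrix: `N⁺(b) ⊆ N⁺(a)` and `N⁻(b) ⊆ N⁻(a)` outside `{a, b}`. -/
def Dominates (a b : Fin n) : Prop :=
  ∀ j, j ≠ a → j ≠ b → A b j ≤ A a j ∧ A j b ≤ A j a

variable {a b : Fin n}

theorem kelmansG_apply_max {i : Fin n} (hia : i ≠ a) (hib : i ≠ b) :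
    kelmansG A a b i a = max (A i a) (A i b) ∧ kelmansG A a b a i = max (A a i) (A b i) := by
  simp [kelmansG, hia, hib]

theorem kelmansG_apply_min (hab : a ≠ b) {i : Fin n} (hia : i ≠ a) (hib : i ≠ b) :
    kelmansG A a b i b = min (A i a) (A i b) ∧ kelmansG A a b b i = min (A a i) (A b i) := by
  simp [kelmansG, hia, hib, hab.symm]

theorem kelmansG_apply_of_ne_of_ne {i j : Fin n} (hia : i ≠ a) (hib : i ≠ b) (hja : j ≠ a)
    (hjb : j ≠ b) : kelmansG A a b i j = A i j := by
  simp [kelmansG, hia, hib, hja, hjb]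

theorem le_kelmansG_left_row (j : Fin n) : A a j ≤ kelmansG A a b a j := by
  simp only [kelmansG, Matrix.of_apply]
  split_ifs <;> simp_all

theorem le_kelmansG_left_col (j : Fin n) : A j a ≤ kelmansG A a b j a := by
  simp only [kelmansG, Matrix.of_apply]
  split_ifs <;> simp_all

theorem kelmansG_zero_or_one (hA : ∀ i j, A i j = 0 ∨ A i j = 1) (i j : Fin n) :
    kelmansG A a b i j = 0 ∨ kelmansG A a b i j = 1 := by
  simp only [kelmansG, Matrix.of_apply]
  split_ifs
  · rcases max_choice (A i a) (A i b) with h | h <;> rw [h] <;> apply hA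
  · rcases min_choice (A i a) (A i b) with h | h <;> rw [h] <;> apply hA
  · rcases max_choice (A a j) (A b j) with h | h <;> rw [h] <;> apply hA
  · rcases min_choice (A a j) (A b j) with h | h <;> rw [h] <;> apply hA
  · apply hA

theorem kelmansG_eq_self_iff : kelmansG A a b = A ↔ Dominates A a b := by
  refine ⟨fun h j hja hjb => ?_, fun hd => ?_⟩
  · obtain ⟨hBja, hBaj⟩ := kelmansG_apply_max A hja hjb
    rw [h] at hBja hBaj
    exact ⟨max_eq_left_iff.1 hBaj.symm, max_eq_left_iff.1 hBja.symm⟩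
  · ext i j
    simp only [kelmansG, Matrix.of_apply]
    split_ifs with h₁ h₂ h₃ h₄
    · obtain ⟨hia, hib, rfl⟩ := h₁
      exact max_eq_left (hd i hia hib).2
    · obtain ⟨hia, hib, rfl⟩ := h₂
      exact min_eq_right (hd i hia hib).2
    · obtain ⟨rfl, hja, hjb⟩ := h₃
      exact max_eq_left (hd j hja hjb).1
    · obtain ⟨rfl, hja, hjb⟩ := h₄
      exact min_eq_right (hd j hja hjb).1
    · rfl

theorem kelmansG_submatrix_swap (hdiag : A a a = A b b) (hnoarc : A a b = A b a) :
    kelmansG (A.submatrix (Equiv.swap a b) (Equiv.swap a b)) a b = kelmansG A a b := by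
  rcases eq_or_ne a b with rfl | hab
  · simp
  ext i j
  simp only [kelmansG, Matrix.of_apply, Matrix.submatrix_apply]
  rcases eq_or_ne i a with hia | hia <;> rcases eq_or_ne i b with hib | hib <;>
    rcases eq_or_ne j a with hja | hja <;> rcases eq_or_ne j b with hjb | hjb <;>
    simp [*, Equiv.swap_apply_of_ne_of_ne, max_comm, min_comm]

theorem dominates_submatrix_swap_iff :
    Dominates (A.submatrix (Equiv.swap a b) (Equiv.swap a b)) a b ↔ Dominates A b a := by
  refine ⟨fun h j hjb hja => ?_, fun h j hja hjb => ?_⟩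
  · simpa [Equiv.swap_apply_of_ne_of_ne hja hjb] using h j hja hjb
  · simpa [Equiv.swap_apply_of_ne_of_ne hja hjb] using h j hjb hja

theorem dominates_iff_subset (hA : IsMixedAdj A) :
    Dominates A a b ↔ ({v | A b v = 1} \ {a} ⊆ {v | A a v = 1} \ {b} ∧
        {v | A v b = 1} \ {a} ⊆ {v | A v a = 1} \ {b}) := by
  obtain ⟨h01, hdiag⟩ := hA
  have hne {u v : Fin n} (h : A u v = 1) : v ≠ u := by
    rintro rfl
    simp [hdiag] at h
  simp only [Dominates, le_iff_eq_one_imp (h01 _ _) (h01 _ _), Set.subset_def, Set.mem_sdiff,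
    Set.mem_ofPred_eq, Set.mem_singleton_iff]
  constructor
  · exact fun hd => ⟨fun v ⟨hbv, hva⟩ => ⟨(hd v hva (hne hbv)).1 hbv, hne hbv⟩,
      fun v ⟨hvb, hva⟩ => ⟨(hd v hva (hne hvb).symm).2 hvb, (hne hvb).symm⟩⟩
  · exact fun ⟨hout, hin⟩ j hja _ =>
      ⟨fun h => (hout j ⟨h, hja⟩).1, fun h => (hin j ⟨h, hja⟩).1⟩

theorem kelmansG_eq_submatrix_swap_of_dominates (hdiag : A a a = A b b) (hnoarc : A a b = A b a)
    (h : Dominates A b a) :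
    kelmansG A a b = A.submatrix (Equiv.swap a b) (Equiv.swap a b) := by
  rwa [← kelmansG_submatrix_swap A hdiag hnoarc, kelmansG_eq_self_iff,
    dominates_submatrix_swap_iff]

variable {A}

theorem mixedDeg_kelmansG_of_ne (hA : ∀ i j, A i j = 0 ∨ A i j = 1) (hab : a ≠ b) {u : Fin n}
    (hua : u ≠ a) (hub : u ≠ b) : mixedDeg (kelmansG A a b) u = mixedDeg A u := by
  obtain ⟨hBua, hBau⟩ := kelmansG_apply_max A hua hub
  obtain ⟨hBub, hBbu⟩ := kelmansG_apply_min A hab hua hub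
  have hrow : ∑ j, kelmansG A a b u j = ∑ j, A u j :=
    sum_eq_sum_of_eq_off_pair hab (fun j hja hjb => kelmansG_apply_of_ne_of_ne A hua hub hja hjb)
      (by rw [hBua, hBub, max_add_min])
  have hcol : ∑ j, kelmansG A a b j u = ∑ j, A j u :=
    sum_eq_sum_of_eq_off_pair hab (fun j hja hjb => kelmansG_apply_of_ne_of_ne A hja hjb hua hub)
      (by rw [hBau, hBbu, max_add_min])
  have hcast : (mixedDeg (kelmansG A a b) u : ℝ) = mixedDeg A u := by
    rw [mixedDeg_eq_sum (kelmansG_zero_or_one A hA), mixedDeg_eq_sum hA, hrow, hcol]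
  exact_mod_cast hcast

theorem mixedDeg_kelmansG_eq_or_eq (hA : ∀ i j, A i j = 0 ∨ A i j = 1) (hab : a ≠ b)
    (h : degSeq (kelmansG A a b) = degSeq A) :
    mixedDeg (kelmansG A a b) a = mixedDeg A a ∨ mixedDeg (kelmansG A a b) a = mixedDeg A b :=
  Multiset.eq_or_eq_of_map_univ_eq hab (fun _ hua hub => mixedDeg_kelmansG_of_ne hA hab hua hub)
    (degSeq_eq_degSeq_iff.1 h)

theorem dominates_of_mixedDeg_kelmansG_eq (hA : ∀ i j, A i j = 0 ∨ A i j = 1)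
    (h : mixedDeg (kelmansG A a b) a = mixedDeg A a) : Dominates A a b := by
  have hsum :
      ∑ j, kelmansG A a b a j + ∑ j, kelmansG A a b j a = ∑ j, A a j + ∑ j, A j a := by
    rw [← mixedDeg_eq_sum hA, ← mixedDeg_eq_sum (kelmansG_zero_or_one A hA), h]
  have hrow_le : ∀ j ∈ univ, A a j ≤ kelmansG A a b a j := fun j _ => le_kelmansG_left_row A j
  have hcol_le : ∀ j ∈ univ, A j a ≤ kelmansG A a b j a := fun j _ => le_kelmansG_left_col A j
  have hrow_sum := sum_le_sum hrow_le
  have hcol_sum := sum_le_sum hcol_le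
  have hrow := (sum_eq_sum_iff_of_le hrow_le).1 (by linarith)
  have hcol := (sum_eq_sum_iff_of_le hcol_le).1 (by linarith)
  intro j hja hjb
  obtain ⟨hBja, hBaj⟩ := kelmansG_apply_max A hja hjb
  exact ⟨max_eq_left_iff.1 (hBaj ▸ (hrow j (mem_univ j)).symm),
    max_eq_left_iff.1 (hBja ▸ (hcol j (mem_univ j)).symm)⟩

end Kelmans

/-- `d(G_b^a) = d(G)` iff one of the two neighborhood-containment conditions holds,
and in that case `G_b^a` is isomorphic to `G`. -/
theorem degSeq_kelmansG_eq_iff {n : ℕ} (A : Matrix (Fin n) (Fin n) ℝ) (hA : IsMixedAdj A)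
    (a b : Fin n) (hab : a ≠ b) (hnoarc : A a b = A b a) :
    (degSeq (kelmansG A a b) = degSeq A ↔
      (({v | A a v = 1} \ {b} ⊆ {v | A b v = 1} \ {a} ∧
        {v | A v a = 1} \ {b} ⊆ {v | A v b = 1} \ {a}) ∨
       ({v | A b v = 1} \ {a} ⊆ {v | A a v = 1} \ {b} ∧
        {v | A v b = 1} \ {a} ⊆ {v | A v a = 1} \ {b}))) ∧
    (degSeq (kelmansG A a b) = degSeq A →
      ∃ e : Equiv.Perm (Fin n), ∀ u v, A u v = kelmansG A a b (e u) (e v)) := by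
  have hdiag : A a a = A b b := by rw [hA.2 a, hA.2 b]
  have hiff : degSeq (kelmansG A a b) = degSeq A ↔ Dominates A b a ∨ Dominates A a b := by
    refine ⟨fun h => ?_, ?_⟩
    · rcases mixedDeg_kelmansG_eq_or_eq hA.1 hab h with hdeg | hdeg
      · exact .inr (dominates_of_mixedDeg_kelmansG_eq hA.1 hdeg)
      · refine .inl ((dominates_submatrix_swap_iff A).1
          (dominates_of_mixedDeg_kelmansG_eq (fun _ _ => hA.1 _ _) ?_))
        rw [kelmansG_submatrix_swap A hdiag hnoarc, hdeg, mixedDeg_submatrix,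
          Equiv.swap_apply_left]
    · rintro (h | h)
      · rw [kelmansG_eq_submatrix_swap_of_dominates A hdiag hnoarc h, degSeq_submatrix]
      · rw [(kelmansG_eq_self_iff A).2 h]
  refine ⟨hiff.trans ?_, fun h => ?_⟩
  · rw [dominates_iff_subset A hA, dominates_iff_subset A hA]
  rcases hiff.1 h with h | h
  · refine ⟨Equiv.swap a b, fun u v => ?_⟩
    rw [kelmansG_eq_submatrix_swap_of_dominates A hdiag hnoarc h]
    simp
  · exact ⟨1, fun u v => by rw [(kelmansG_eq_self_iff A).2 h]; rfl⟩
end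

section
/- For α ∈ [0,1] and n ≥ 2, among all mixed trees of order n and size m (n−1 ≤ m ≤ 2n−2), the maximum A_α-spectral radius over all mixed stars of order n and size m with center out-degree m−n+k+1 (0 ≤ k ≤ 2n−m−2) is attained at k = 2n−m−2, i.e., when the center's out-degree is n−1; at this value the spectral radius is the largest root of λ² − αnλ + α²(n−1) − (1−α)²(m−n+1). -/
attribute [local instance] Classical.propDecidable

/-- The mixed star of order `n` and size `m` with center `0`: the `m-n+1` undirected edges
join the center to vertices `1, …, m-n+1`, there are arcs from the center to vertices
`m-n+2, …, m-n+k+1`, and arcs from every remaining vertex to the center, so the center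
has out-degree `m-n+k+1`. -/
noncomputable def starMat (n m k : ℕ) : Matrix (Fin n) (Fin n) ℝ :=
  Matrix.of fun i j =>
    if i.val = 0 ∧ 1 ≤ j.val ∧ j.val ≤ m - (n - 1) + k then 1
    else if j.val = 0 ∧ 1 ≤ i.val ∧ (i.val ≤ m - (n - 1) ∨ m - (n - 1) + k + 1 ≤ i.val) then 1
    else 0

/-!
In a mixed star with center `c` every edge and arc meets `c`, so the eigen-equation of `A_α` at a
leaf `i` reads `μ vᵢ = A i c (α vᵢ + (1 - α) v_c)`. For `μ ∉ {0, α}` this forces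
`vᵢ = A i c (1 - α) v_c / (μ - α)` and `v_c ≠ 0`, and the equation at `c` becomes
`(μ - α)(μ - α K) = t (1 - α)²`, where `K` is the out-degree of `c` and `t` the number of undirected
edges. Conversely the larger root `ρ` of this quadratic is an eigenvalue, and `0, α ≤ ρ`, so the
spectral radius is `ρ`. For the stars `starMat n m k` one has `K = m - n + 1 + k` and
`t = m - n + 1`, and `ρ` increases with `K` because the quadratic for `K' ≥ K` is nonpositive
at the root for `K`.
-/

/-- The larger root of `(x - α) (x - α K) = t (1 - α)²`. -/
noncomputable def starRoot (α K t : ℝ) : ℝ :=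
  (α * (K + 1) + √((α * (K - 1)) ^ 2 + 4 * t * (1 - α) ^ 2)) / 2

section starRoot

variable {α K t : ℝ}

lemma abs_le_sqrt_starDiscr (ht : 0 ≤ t) :
    |α * (K - 1)| ≤ √((α * (K - 1)) ^ 2 + 4 * t * (1 - α) ^ 2) :=
  Real.abs_le_sqrt (by nlinarith [sq_nonneg (1 - α)])

lemma sub_starRoot_mul_sub_starRoot (ht : 0 ≤ t) (x : ℝ) :
    (x - α) * (x - α * K) - t * (1 - α) ^ 2
      = (x - starRoot α K t) * (x - (α * (K + 1) - starRoot α K t)) := by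
  have h := Real.sq_sqrt (show 0 ≤ (α * (K - 1)) ^ 2 + 4 * t * (1 - α) ^ 2 by positivity)
  unfold starRoot
  linear_combination (1 / 4 : ℝ) * h

lemma starRoot_isRoot (ht : 0 ≤ t) :
    (starRoot α K t - α) * (starRoot α K t - α * K) = t * (1 - α) ^ 2 := by
  linear_combination sub_starRoot_mul_sub_starRoot ht (starRoot α K t)

lemma le_starRoot (ht : 0 ≤ t) : α ≤ starRoot α K t := by
  have := abs_le_sqrt_starDiscr (α := α) (K := K) ht
  have := neg_abs_le (α * (K - 1))
  unfold starRoot; linarith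

lemma mul_le_starRoot (ht : 0 ≤ t) : α * K ≤ starRoot α K t := by
  have := abs_le_sqrt_starDiscr (α := α) (K := K) ht
  have := le_abs_self (α * (K - 1))
  unfold starRoot; linarith

lemma starRoot_conj_le (ht : 0 ≤ t) : α * (K + 1) - starRoot α K t ≤ starRoot α K t := by
  linarith [le_starRoot (α := α) (K := K) ht, mul_le_starRoot (α := α) (K := K) ht]

lemma le_starRoot_of_nonpos (ht : 0 ≤ t) {x : ℝ}
    (hx : (x - α) * (x - α * K) - t * (1 - α) ^ 2 ≤ 0) : x ≤ starRoot α K t := by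
  rw [sub_starRoot_mul_sub_starRoot ht] at hx
  nlinarith [starRoot_conj_le (α := α) (K := K) ht]

lemma starRoot_mono (hα : 0 ≤ α) (ht : 0 ≤ t) : Monotone (starRoot α · t) := by
  intro K K' hK
  apply le_starRoot_of_nonpos ht
  have := starRoot_isRoot (α := α) (K := K) ht
  nlinarith [le_starRoot (α := α) (K := K) ht, mul_nonneg hα (sub_nonneg.2 hK)]

lemma norm_le_starRoot (hα : 0 ≤ α) (hK : 0 ≤ K) (ht : 0 ≤ t) {μ : ℂ}
    (hμ : (μ - α) * (μ - α * K) = t * (1 - α) ^ 2) : ‖μ‖ ≤ starRoot α K t := by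
  have hρ : ((starRoot α K t - α) * (starRoot α K t - α * K) : ℂ) = t * (1 - α) ^ 2 := by
    exact_mod_cast starRoot_isRoot ht
  have hαρ := le_starRoot (α := α) (K := K) ht
  have hfac : (μ - starRoot α K t) * (μ - (α * (K + 1) - starRoot α K t : ℝ)) = 0 := by
    push_cast
    linear_combination hμ - hρ
  rcases mul_eq_zero.1 hfac with h | h
  · rw [sub_eq_zero.1 h, Complex.norm_real, Real.norm_of_nonneg (hα.trans hαρ)]
  · rw [sub_eq_zero.1 h, Complex.norm_real, Real.norm_eq_abs, abs_le]
    exact ⟨by nlinarith, starRoot_conj_le ht⟩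

end starRoot

open Matrix

lemma Matrix.isRoot_charpoly_iff_exists_mulVec_eq_smul {ι K : Type*} [Fintype ι] [DecidableEq ι]
    [Field K] (M : Matrix ι ι K) (μ : K) :
    M.charpoly.IsRoot μ ↔ ∃ v ≠ 0, M *ᵥ v = μ • v := by
  rw [Polynomial.IsRoot.def, eval_charpoly, ← exists_mulVec_eq_zero_iff]
  simp only [sub_mulVec, scalar_apply, sub_eq_zero, eq_comm (a := M *ᵥ _)]
  simp [funext_iff]

lemma Aalpha_map_mulVec_apply {n : ℕ} (α : ℝ) (A : Matrix (Fin n) (Fin n) ℝ) (v : Fin n → ℂ)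
    (i : Fin n) :
    ((Aalpha α A).map (fun x => (x : ℂ)) *ᵥ v) i
      = α * (∑ j, A i j : ℝ) * v i + (1 - α) * ∑ j, (A i j : ℂ) * v j := by
  simp [Aalpha, mulVec, dotProduct, diagonal_apply, add_mul, Finset.sum_add_distrib,
    Finset.mul_sum, mul_assoc, apply_ite Complex.ofReal, ite_mul]

def IsMixedStar {n : ℕ} (A : Matrix (Fin n) (Fin n) ℝ) (c : Fin n) : Prop :=
  IsMixedAdj A ∧ ∀ i j, i ≠ c → j ≠ c → A i j = 0

namespace IsMixedStar

variable {n : ℕ} {A : Matrix (Fin n) (Fin n) ℝ} {c : Fin n} (hA : IsMixedStar A c) (α : ℝ)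
include hA

lemma apply_nonneg (i j : Fin n) : 0 ≤ A i j := by
  rcases hA.1.1 i j with h | h <;> norm_num [h]

lemma sum_mul_apply_nonneg : 0 ≤ ∑ j, A c j * A j c :=
  Finset.sum_nonneg fun j _ => mul_nonneg (hA.apply_nonneg c j) (hA.apply_nonneg j c)

lemma mulVec_apply_of_ne (v : Fin n → ℂ) {i : Fin n} (hi : i ≠ c) :
    ((Aalpha α A).map (fun x => (x : ℂ)) *ᵥ v) i = A i c * (α * v i + (1 - α) * v c) := by
  have hrow : ∑ j, A i j = A i c :=
    Finset.sum_eq_single c (fun j _ hj => hA.2 i j hi hj) (by simp)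
  have hv : ∑ j, (A i j : ℂ) * v j = A i c * v c :=
    Finset.sum_eq_single c (fun j _ hj => by simp [hA.2 i j hi hj]) (by simp)
  rw [Aalpha_map_mulVec_apply, hrow, hv]
  ring

lemma eigenvalue_cases {μ : ℂ} {v : Fin n → ℂ} (hv : v ≠ 0)
    (h : (Aalpha α A).map (fun x => (x : ℂ)) *ᵥ v = μ • v) :
    μ = 0 ∨ μ = α ∨
      (μ - α) * (μ - α * (∑ j, A c j : ℝ)) = (∑ j, A c j * A j c : ℝ) * (1 - α) ^ 2 := by
  by_contra! hμ
  obtain ⟨hμ0, hμα, hquad⟩ := hμ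
  have hμα' : μ - α ≠ 0 := sub_ne_zero.2 hμα
  have hleaf : ∀ i, i ≠ c → v i = A i c * ((1 - α) * v c / (μ - α)) := by
    intro i hi
    have hi' := congrFun h i
    rw [hA.mulVec_apply_of_ne α v hi, Pi.smul_apply, smul_eq_mul] at hi'
    rcases hA.1.1 i c with h0 | h1
    · simpa [h0, hμ0] using hi'.symm
    · rw [h1, Complex.ofReal_one, one_mul] at hi'
      rw [h1, Complex.ofReal_one, one_mul, eq_div_iff hμα']
      linear_combination -hi'
  have hvc : v c ≠ 0 := by
    refine fun h0 => hv (funext fun i => ?_)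
    by_cases hi : i = c
    · rw [hi, h0, Pi.zero_apply]
    · rw [hleaf i hi, h0, Pi.zero_apply, mul_zero, zero_div, mul_zero]
  have hsum : ∑ j, (A c j : ℂ) * v j
      = (∑ j, A c j * A j c : ℝ) * ((1 - α) * v c / (μ - α)) := by
    push_cast
    rw [Finset.sum_mul]
    refine Finset.sum_congr rfl fun j _ => ?_
    by_cases hj : j = c
    · simp [hj, hA.1.2 c]
    · rw [hleaf j hj, mul_assoc]
  have hc := congrFun h c
  rw [Aalpha_map_mulVec_apply, hsum, Pi.smul_apply, smul_eq_mul] at hc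
  apply hquad
  field_simp at hc
  linear_combination -hc

lemma exists_mulVec_eq_smul {μ : ℂ}
    (hμ : (μ - α) * (μ - α * (∑ j, A c j : ℝ)) = (∑ j, A c j * A j c : ℝ) * (1 - α) ^ 2) :
    ∃ v, v c = μ - α ∧ (Aalpha α A).map (fun x => (x : ℂ)) *ᵥ v = μ • v := by
  refine ⟨fun i => if i = c then μ - α else (1 - α) * A i c, if_pos rfl, funext fun i => ?_⟩
  rw [Pi.smul_apply, smul_eq_mul]
  by_cases hi : i = c
  · subst hi
    have hsum : ∑ j, (A i j : ℂ) * (if j = i then μ - α else (1 - α) * A j i)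
        = (1 - α) * (∑ j, A i j * A j i : ℝ) := by
      push_cast
      rw [Finset.mul_sum]
      refine Finset.sum_congr rfl fun j _ => ?_
      split_ifs with hj
      · simp [hj, hA.1.2]
      · ring
    rw [Aalpha_map_mulVec_apply, hsum, if_pos rfl]
    linear_combination -hμ
  · rw [hA.mulVec_apply_of_ne α _ hi, if_neg hi, if_pos rfl]
    rcases hA.1.1 i c with h | h <;> simp only [h] <;> push_cast <;> ring

lemma mulVec_single_of_inArc {j : Fin n} (hj : j ≠ c) (hjc : A j c = 1) (hcj : A c j = 0) :
    (Aalpha α A).map (fun x => (x : ℂ)) *ᵥ Pi.single j 1 = (α : ℂ) • Pi.single j 1 := by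
  funext i
  by_cases hi : i = c
  · subst hi
    simp [Aalpha_map_mulVec_apply, Pi.single_apply, hcj, Ne.symm hj]
  · rw [hA.mulVec_apply_of_ne α _ hi]
    by_cases hij : i = j
    · subst hij
      simp [hjc, hi]
    · simp [hij, Ne.symm hj]

lemma mulVec_single_center (hK : α * ∑ j, A c j = α) (hcol : ∀ i ≠ c, A i c * (1 - α) = 0) :
    (Aalpha α A).map (fun x => (x : ℂ)) *ᵥ Pi.single c 1 = (α : ℂ) • Pi.single c 1 := by
  funext i
  by_cases hi : i = c
  · subst hi
    simpa [Aalpha_map_mulVec_apply, Pi.single_apply, hA.1.2] using congrArg Complex.ofReal hK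
  · simpa [hA.mulVec_apply_of_ne α _ hi, Pi.single_apply, hi] using
      congrArg Complex.ofReal (hcol i hi)

lemma isRoot_charpoly_starRoot (hα : 0 ≤ α)
    (hne : 1 ≤ ∑ j, A c j ∨ ∃ j ≠ c, A j c = 1 ∧ A c j = 0) :
    ((Aalpha α A).map (fun x => (x : ℂ))).charpoly.IsRoot
      (starRoot α (∑ j, A c j) (∑ j, A c j * A j c)) := by
  set K := ∑ j, A c j
  set t := ∑ j, A c j * A j c
  have ht : 0 ≤ t := hA.sum_mul_apply_nonneg
  have hρ := starRoot_isRoot (α := α) (K := K) ht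
  rw [isRoot_charpoly_iff_exists_mulVec_eq_smul]
  by_cases hρα : starRoot α K t = α
  · rw [hρα]
    by_cases hin : ∃ j ≠ c, A j c = 1 ∧ A c j = 0
    · obtain ⟨j, hj, hjc, hcj⟩ := hin
      exact ⟨Pi.single j 1, by simp, hA.mulVec_single_of_inArc α hj hjc hcj⟩
    -- Without in-arcs, `ρ = α` forces `α K = α`, and `t (1 - α)² = 0` kills the column of `c`.
    have hK : α * K = α := by
      refine le_antisymm ?_ (le_mul_of_one_le_right hα (hne.resolve_right hin))
      simpa only [hρα] using mul_le_starRoot (α := α) (K := K) ht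
    have ht0 : t * (1 - α) ^ 2 = 0 := by rw [← hρ, hρα, sub_self, zero_mul]
    have hcol : ∀ i ≠ c, A i c * (1 - α) = 0 := by
      intro i hi
      rcases hA.1.1 i c with h0 | h1
      · rw [h0, zero_mul]
      have hci : A c i = 1 := (hA.1.1 c i).resolve_left fun h0 => hin ⟨i, hi, h1, h0⟩
      have h1t : 1 ≤ t := by
        calc (1 : ℝ) = A c i * A i c := by rw [hci, h1, one_mul]
          _ ≤ t := Finset.single_le_sum (f := fun j => A c j * A j c)
              (fun j _ => mul_nonneg (hA.apply_nonneg c j) (hA.apply_nonneg j c))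
              (Finset.mem_univ i)
      rw [h1, one_mul]
      exact pow_eq_zero_iff two_ne_zero |>.1 (by nlinarith [sq_nonneg (1 - α)])
    exact ⟨Pi.single c 1, by simp, hA.mulVec_single_center α hK hcol⟩
  · obtain ⟨v, hvc, hv⟩ := hA.exists_mulVec_eq_smul α (μ := starRoot α K t) (by exact_mod_cast hρ)
    refine ⟨v, fun h0 => hρα ?_, hv⟩
    exact_mod_cast sub_eq_zero.1 (hvc.symm.trans (congrFun h0 c))

theorem specRad_Aalpha (hα : 0 ≤ α) (hne : 1 ≤ ∑ j, A c j ∨ ∃ j ≠ c, A j c = 1 ∧ A c j = 0) :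
    specRad (Aalpha α A) = starRoot α (∑ j, A c j) (∑ j, A c j * A j c) := by
  have hK : 0 ≤ ∑ j, A c j := Finset.sum_nonneg fun j _ => hA.apply_nonneg c j
  have ht := hA.sum_mul_apply_nonneg
  have hρ := hα.trans (le_starRoot (K := ∑ j, A c j) ht)
  refine IsGreatest.csSup_eq ⟨⟨_, hA.isRoot_charpoly_starRoot α hα hne, ?_⟩, ?_⟩
  · rw [Complex.norm_real, Real.norm_of_nonneg hρ]
  · rintro r ⟨μ, hμ, rfl⟩
    obtain ⟨v, hv, h⟩ := (isRoot_charpoly_iff_exists_mulVec_eq_smul _ μ).1 hμ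
    rcases hA.eigenvalue_cases α hv h with rfl | rfl | hq
    · simpa using hρ
    · simpa [abs_of_nonneg hα] using le_starRoot ht
    · exact norm_le_starRoot hα hK ht hq

end IsMixedStar

lemma sum_fin_ite_one_le_le {n K : ℕ} (hK : K < n) :
    ∑ j : Fin n, (if 1 ≤ j.val ∧ j.val ≤ K then (1 : ℝ) else 0) = K := by
  rw [Fin.sum_univ_eq_sum_range (fun j => if 1 ≤ j ∧ j ≤ K then (1 : ℝ) else 0),
    Finset.sum_boole]
  have : (Finset.range n).filter (fun j => 1 ≤ j ∧ j ≤ K) = Finset.Icc 1 K := by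
    ext j
    simp only [Finset.mem_filter, Finset.mem_range, Finset.mem_Icc]
    omega
  rw [this, Nat.card_Icc, Nat.add_sub_cancel]

section starMat

variable {n : ℕ} (m k : ℕ)

lemma isMixedStar_starMat (hn : 0 < n) : IsMixedStar (starMat n m k) ⟨0, hn⟩ := by
  refine ⟨⟨fun i j => ?_, fun i => ?_⟩, fun i j hi hj => ?_⟩
  · simp only [starMat, of_apply]
    split_ifs <;> simp
  · simp only [starMat, of_apply]
    split_ifs <;> first | rfl | omega
  · have hi : i.val ≠ 0 := fun h => hi (Fin.ext h)
    have hj : j.val ≠ 0 := fun h => hj (Fin.ext h)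
    simp [starMat, hi, hj]

variable {m k}

lemma starMat_sum_center (hn : 0 < n) (hk : m - (n - 1) + k ≤ n - 1) :
    ∑ j, starMat n m k ⟨0, hn⟩ j = (m - (n - 1) + k : ℕ) := by
  rw [← sum_fin_ite_one_le_le (n := n) (by omega)]
  refine Finset.sum_congr rfl fun j _ => ?_
  have := j.isLt
  simp only [starMat, of_apply, true_and]
  split_ifs <;> first | rfl | omega

lemma starMat_sum_undirected (hn : 0 < n) (hk : m - (n - 1) + k ≤ n - 1) :
    ∑ j, starMat n m k ⟨0, hn⟩ j * starMat n m k j ⟨0, hn⟩ = (m - (n - 1) : ℕ) := by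
  rw [← sum_fin_ite_one_le_le (n := n) (by omega)]
  refine Finset.sum_congr rfl fun j _ => ?_
  have := j.isLt
  simp only [starMat, of_apply, true_and]
  split_ifs <;> first | omega | norm_num

lemma specRad_Aalpha_starMat (hn : 2 ≤ n) (hk : m - (n - 1) + k ≤ n - 1) {α : ℝ} (hα : 0 ≤ α) :
    specRad (Aalpha α (starMat n m k)) = starRoot α (m - (n - 1) + k : ℕ) (m - (n - 1) : ℕ) := by
  have hn0 : 0 < n := by omega
  have hK := starMat_sum_center hn0 hk
  rw [(isMixedStar_starMat m k hn0).specRad_Aalpha α hα, hK, starMat_sum_undirected hn0 hk]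
  rw [hK, Nat.one_le_cast]
  rcases lt_or_eq_of_le hk with hlt | heq
  · refine Or.inr ⟨⟨n - 1, by omega⟩, Fin.ne_of_val_ne (show n - 1 ≠ 0 by omega), ?_, ?_⟩
    · simp only [starMat, of_apply, true_and]
      split_ifs <;> first | rfl | omega
    · simp only [starMat, of_apply, true_and]
      split_ifs <;> first | rfl | omega
  · exact Or.inl (by omega)

end starMat

/-- Among mixed stars of order `n`, size `m` and center out-degree `m-n+k+1`
(`0 ≤ k ≤ 2n-m-2`), the `A_α`-spectral radius is maximized at `k = 2n-m-2` (center
out-degree `n-1`), where it equals the largest root of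
`λ² - αnλ + α²(n-1) - (1-α)²(m-n+1)`. -/
theorem specRad_starMat_max {n m : ℕ} (hn : 2 ≤ n) (hm₁ : n - 1 ≤ m) (hm₂ : m ≤ 2 * n - 2)
    (α : ℝ) (hα : α ∈ Set.Icc (0:ℝ) 1) :
    (∀ k, k ≤ 2 * n - m - 2 →
      specRad (Aalpha α (starMat n m k)) ≤
        specRad (Aalpha α (starMat n m (2 * n - m - 2)))) ∧
    (specRad (Aalpha α (starMat n m (2 * n - m - 2))) ^ 2
        - α * n * specRad (Aalpha α (starMat n m (2 * n - m - 2)))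
        + α ^ 2 * ((n : ℝ) - 1) - (1 - α) ^ 2 * ((m : ℝ) - n + 1) = 0 ∧
      ∀ x : ℝ, x ^ 2 - α * n * x + α ^ 2 * ((n : ℝ) - 1)
          - (1 - α) ^ 2 * ((m : ℝ) - n + 1) = 0 →
        x ≤ specRad (Aalpha α (starMat n m (2 * n - m - 2)))) := by
  have ht : ((m - (n - 1) : ℕ) : ℝ) = m - n + 1 := by
    rw [Nat.cast_sub hm₁, Nat.cast_sub (by omega)]
    ring
  have hmax : ((m - (n - 1) + (2 * n - m - 2) : ℕ) : ℝ) = n - 1 := by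
    rw [show m - (n - 1) + (2 * n - m - 2) = n - 1 by omega, Nat.cast_sub (by omega)]
    ring
  have ht0 : (0 : ℝ) ≤ m - n + 1 := ht ▸ Nat.cast_nonneg _
  have hspec := fun k (hk : k ≤ 2 * n - m - 2) =>
    specRad_Aalpha_starMat (m := m) (k := k) hn (by omega) hα.1
  rw [hspec _ le_rfl, hmax, ht]
  refine ⟨fun k hk => ?_, by linear_combination starRoot_isRoot (α := α) (K := (n : ℝ) - 1) ht0,
    fun x hx => le_starRoot_of_nonpos ht0 (by linear_combination hx)⟩
  rw [hspec k hk, ht, ← hmax]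
  exact starRoot_mono hα.1 ht0 (Nat.cast_le.2 (by omega))
end
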